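/- Let R be a nonnegative random variable, c > 0 and λ₁ > 0 such that −log E[e^{−λR}] ≥ c√λ for all λ ≥ λ₁. Then for every x with 0 < x ≤ c/(2√λ₁), one has P(R ≤ x) ≤ exp(−c²/(4x)). -/

import Mathlib

/-!
Chernoff bound for the lower tail, `P(R ≤ x) ≤ e^{λx} E[e^{-λR}] ≤ e^{λx - c√λ}`, at the
minimiser `λ = c²/(4x²)` of the exponent; the restriction on `x` is exactly `λ ≥ λ₁`.
-/

open MeasureTheory Real

theorem measureReal_le_le_exp_of_le_neg_log_integral_exp {Ω : Type*} [MeasurableSpace Ω]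
    {P : Measure Ω} [IsFiniteMeasure P] {R : Ω → ℝ} {l a : ℝ} (hl : 0 ≤ l) (ha : 0 < a)
    (h : a ≤ -log (∫ ω, exp (-(l * R ω)) ∂P)) (x : ℝ) :
    P.real {ω | R ω ≤ x} ≤ exp (l * x - a) := by
  set I := ∫ ω, exp (-(l * R ω)) ∂P
  -- `a > 0` rules out the junk value `I = 0`, hence also non-integrability.
  have hI_ne : I ≠ 0 := fun hI => by
    rw [hI, log_zero, neg_zero] at h; linarith
  have hI_pos : 0 < I := (integral_nonneg fun ω => (exp_pos _).le).lt_of_ne' hI_ne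
  have hI_le : I ≤ exp (-a) := (exp_log hI_pos).symm.le.trans (exp_le_exp.mpr (by linarith))
  have h_int : Integrable (fun ω => exp (-l * R ω)) P := by
    simpa only [neg_mul] using Integrable.of_integral_ne_zero hI_ne
  calc P.real {ω | R ω ≤ x} ≤ exp (-(-l) * x) * ProbabilityTheory.mgf R P (-l) :=
        ProbabilityTheory.measure_le_le_exp_mul_mgf x (neg_nonpos.mpr hl) h_int
    _ = exp (l * x) * I := by simp only [neg_neg, ProbabilityTheory.mgf, neg_mul, I]
    _ ≤ exp (l * x) * exp (-a) := by gcongr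
    _ = exp (l * x - a) := by rw [← exp_add, sub_eq_add_neg]

theorem stmt5_general {Ω : Type*} [MeasurableSpace Ω] (P : Measure Ω) [IsProbabilityMeasure P]
    (R : Ω → ℝ)
    (c l1 : ℝ) (hc : 0 < c)
    (h : ∀ l : ℝ, l1 ≤ l → c * Real.sqrt l ≤ - Real.log (∫ ω, Real.exp (-(l * R ω)) ∂P)) :
    ∀ x : ℝ, 0 < x → x ≤ c / (2 * Real.sqrt l1) →
      (P {ω | R ω ≤ x}).toReal ≤ Real.exp (-(c ^ 2 / (4 * x))) := by
  intro x hx hxle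
  set l := (c / (2 * x)) ^ 2 with hl
  have hsqrt_l : √l = c / (2 * x) := sqrt_sq (by positivity)
  -- `√l1 = 0` would make the bound `x ≤ c / 0 = 0`.
  have hsqrt_l1 : 0 < √l1 := by
    by_contra! h0
    rw [le_antisymm h0 (sqrt_nonneg _), mul_zero, div_zero] at hxle
    linarith
  have hl1_le : l1 ≤ l := by
    rw [← sqrt_le_sqrt_iff (sq_nonneg _), hsqrt_l, le_div_iff₀ (by positivity)]
    rw [le_div_iff₀ (by positivity)] at hxle
    linarith
  have hexponent : l * x - c * √l = -(c ^ 2 / (4 * x)) := by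
    rw [hsqrt_l, hl]; field_simp; ring
  have hchernoff := measureReal_le_le_exp_of_le_neg_log_integral_exp (sq_nonneg _)
    (by rw [hsqrt_l]; positivity) (h l hl1_le) x
  rwa [hexponent, measureReal_def] at hchernoff

/-- If −log E[e^{−λR}] ≥ c√λ for all λ ≥ λ₁, then for 0 < x ≤ c/(2√λ₁),
P(R ≤ x) ≤ exp(−c²/(4x)). -/
theorem stmt5 {Ω : Type*} [MeasurableSpace Ω] (P : Measure Ω) [IsProbabilityMeasure P]
    (R : Ω → ℝ) (hR : Measurable R) (hR0 : ∀ ω, 0 ≤ R ω)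
    (c l1 : ℝ) (hc : 0 < c) (hl1 : 0 < l1)
    (h : ∀ l : ℝ, l1 ≤ l → c * Real.sqrt l ≤ - Real.log (∫ ω, Real.exp (-(l * R ω)) ∂P)) :
    ∀ x : ℝ, 0 < x → x ≤ c / (2 * Real.sqrt l1) →
      (P {ω | R ω ≤ x}).toReal ≤ Real.exp (-(c ^ 2 / (4 * x))) :=
  stmt5_general P R c l1 hc h
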